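/- Let n ≥ 2, d ≥ 1, W_0,...,W_n ∈ ℝ^d, ω_0,...,ω_n > 0, and t ∈ [0,1]. Let ω^{(i)}_k and W^{(i)}_k be the quantities produced by the rational de Casteljau algorithm at t. Then the second derivative of the rational Bézier curve satisfies R_n''(t) = n · (ω^{(n-2)}_2/(ω^{(n)}_0)^3) · (2n·(ω^{(n-1)}_0)^2 - (n-1)·ω^{(n-2)}_0·ω^{(n)}_0 - 2·ω^{(n-1)}_0·ω^{(n)}_0) · (W^{(n-2)}_2 - W^{(n-2)}_1) - n · (ω^{(n-2)}_0/(ω^{(n)}_0)^3) · (2n·(ω^{(n-1)}_1)^2 - (n-1)·ω^{(n-2)}_2·ω^{(n)}_0 - 2·ω^{(n-1)}_1·ω^{(n)}_0) · (W^{(n-2)}_1 - W^{(n-2)}_0). -/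

import Mathlib

open Finset

/-- The `k`-th Bernstein polynomial of degree `n`. -/
noncomputable def bern (n k : ℕ) (t : ℝ) : ℝ :=
  (n.choose k : ℝ) * t ^ k * (1 - t) ^ (n - k)

/-- The rational Bézier curve of degree `n` with control points `W` and weights `ω`. -/
noncomputable def RB (n d : ℕ) (ω : ℕ → ℝ) (W : ℕ → Fin d → ℝ) (t : ℝ) : Fin d → ℝ :=
  (∑ k ∈ range (n + 1), ω k * bern n k t)⁻¹ •
    ∑ k ∈ range (n + 1), (ω k * bern n k t) • W k

/-- The weights `ω^{(i)}_k` of the rational de Casteljau algorithm at `t`. -/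
noncomputable def dcw (ω : ℕ → ℝ) (t : ℝ) : ℕ → ℕ → ℝ
  | 0, k => ω k
  | i + 1, k => (1 - t) * dcw ω t i k + t * dcw ω t i (k + 1)

/-- The points `W^{(i)}_k` of the rational de Casteljau algorithm at `t`. -/
noncomputable def dcW (d : ℕ) (ω : ℕ → ℝ) (W : ℕ → Fin d → ℝ) (t : ℝ) :
    ℕ → ℕ → Fin d → ℝ
  | 0, k => W k
  | i + 1, k =>
      ((1 - t) * (dcw ω t i k / dcw ω t (i + 1) k)) • dcW d ω W t i k
        + (t * (dcw ω t i (k + 1) / dcw ω t (i + 1) k)) • dcW d ω W t i (k + 1)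

set_option maxHeartbeats 2000000

lemma convex_hasDerivAt {f g : ℝ → ℝ} {f' g' t : ℝ} (hf : HasDerivAt f f' t)
    (hg : HasDerivAt g g' t) :
    HasDerivAt (fun s => (1 - s) * f s + s * g s)
      ((g t - f t) + ((1 - t) * f' + t * g')) t := by
  have h := (((hasDerivAt_const t (1:ℝ)).sub (hasDerivAt_id t)).mul hf).add
    ((hasDerivAt_id t).mul hg)
  simp only [id_eq] at h
  exact h.congr_deriv (by simp only [Pi.sub_apply, id_eq]; ring)

lemma dcw_hasDerivAt (ω : ℕ → ℝ) (t : ℝ) :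
    ∀ i k, HasDerivAt (fun s => dcw ω s (i + 1) k)
      (((i : ℝ) + 1) * (dcw ω t i (k + 1) - dcw ω t i k)) t := by
  intro i
  induction i with
  | zero =>
    intro k
    have h := convex_hasDerivAt (f := fun _ => ω k) (g := fun _ => ω (k + 1))
      (hasDerivAt_const t (ω k)) (hasDerivAt_const t (ω (k + 1)))
    have hf : (fun s : ℝ => (1 - s) * ω k + s * ω (k + 1)) = fun s => dcw ω s 1 k := by
      funext s; simp [dcw]
    rw [hf] at h
    convert h using 1
    simp [dcw]
  | succ i ih =>
    intro k
    have h := convex_hasDerivAt (ih k) (ih (k + 1))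
    have hf : (fun s : ℝ => (1 - s) * dcw ω s (i + 1) k + s * dcw ω s (i + 1) (k + 1))
        = fun s => dcw ω s (i + 1 + 1) k := by
      funext s; simp [dcw]
    rw [hf] at h
    convert h using 1
    simp only [dcw]
    push_cast
    ring

lemma dcw_pos {ω : ℕ → ℝ} {t : ℝ} (ht0 : 0 ≤ t) (ht1 : t ≤ 1) :
    ∀ i k, (∀ j, k ≤ j → j ≤ k + i → 0 < ω j) → 0 < dcw ω t i k := by
  intro i
  induction i with
  | zero => intro k h; simpa [dcw] using h k le_rfl (by omega)
  | succ i ih =>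
    intro k h
    have h0 := ih k fun j hj hj' => h j hj (by omega)
    have h1 := ih (k + 1) (fun j hj hj' => h j (by omega) (by omega))
    rcases ht1.eq_or_lt with rfl | hlt
    · simp only [dcw]; simpa using h1
    · simp only [dcw]
      nlinarith [mul_pos (by linarith : (0:ℝ) < 1 - t) h0, mul_nonneg ht0 h1.le]

lemma bern_succ_zero (i : ℕ) (t : ℝ) : bern (i + 1) 0 t = (1 - t) * bern i 0 t := by
  simp [bern, pow_succ]; ring

lemma bern_succ_succ (i j : ℕ) (hj : j ≤ i) (t : ℝ) :
    bern (i + 1) (j + 1) t = (1 - t) * bern i (j + 1) t + t * bern i j t := by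
  obtain ⟨s, rfl⟩ := Nat.exists_eq_add_of_le hj
  cases s with
  | zero => simp [bern, Nat.choose_succ_self, Nat.choose_self]; ring
  | succ s =>
    have e1 : j + (s + 1) + 1 - (j + 1) = s + 1 := by omega
    have e2 : j + (s + 1) - (j + 1) = s := by omega
    have e3 : j + (s + 1) - j = s + 1 := by omega
    simp only [bern, Nat.choose_succ_succ (j + (s + 1)) j, e1, e2, e3]
    push_cast
    ring

lemma dcw_eq_sum (c : ℕ → ℝ) (t : ℝ) :
    ∀ i k, dcw c t i k = ∑ j ∈ range (i + 1), c (k + j) * bern i j t := by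
  intro i
  induction i with
  | zero => intro k; simp [dcw, bern]
  | succ i ih =>
    intro k
    have key : ∑ j ∈ range (i + 1 + 1), c (k + j) * bern (i + 1) j t
        = (1 - t) * (∑ j ∈ range (i + 1), c (k + j) * bern i j t)
          + t * (∑ j ∈ range (i + 1), c (k + 1 + j) * bern i j t) := by
      rw [Finset.sum_range_succ' (fun j => c (k + j) * bern (i + 1) j t) (i + 1)]
      have h1 : ∀ j ∈ range (i + 1), c (k + (j + 1)) * bern (i + 1) (j + 1) t
          = (1 - t) * (c (k + (j + 1)) * bern i (j + 1) t)
            + t * (c (k + 1 + j) * bern i j t) := by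
        intro j hj
        rw [bern_succ_succ i j (Nat.lt_succ_iff.mp (mem_range.mp hj)) t]
        have e : k + (j + 1) = k + 1 + j := by omega
        rw [e]; ring
      rw [Finset.sum_congr rfl h1, Finset.sum_add_distrib, ← Finset.mul_sum, ← Finset.mul_sum,
        bern_succ_zero]
      have h2 : (∑ j ∈ range (i + 1), c (k + (j + 1)) * bern i (j + 1) t)
          + c (k + 0) * bern i 0 t
          = ∑ j ∈ range (i + 1), c (k + j) * bern i j t := by
        rw [← Finset.sum_range_succ' (fun j => c (k + j) * bern i j t) (i + 1),
          Finset.sum_range_succ]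
        simp [bern, Nat.choose_succ_self]
      linear_combination (1 - t) * h2
    rw [key, ← ih k, ← ih (k + 1)]
    simp [dcw]

noncomputable def dcP (d : ℕ) (ω : ℕ → ℝ) (W : ℕ → Fin d → ℝ) (t : ℝ) :
    ℕ → ℕ → Fin d → ℝ
  | 0, k => ω k • W k
  | i + 1, k => (1 - t) • dcP d ω W t i k + t • dcP d ω W t i (k + 1)

lemma dcP_apply (d : ℕ) (ω : ℕ → ℝ) (W : ℕ → Fin d → ℝ) (t : ℝ) (j : Fin d) :
    ∀ i k, dcP d ω W t i k j = dcw (fun k' => ω k' * W k' j) t i k := by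
  intro i
  induction i with
  | zero => intro k; simp [dcP, dcw]
  | succ i ih => intro k; simp [dcP, dcw, ih]

lemma dcP_hasDerivAt (d : ℕ) (ω : ℕ → ℝ) (W : ℕ → Fin d → ℝ) (t : ℝ) (i k : ℕ) :
    HasDerivAt (fun s => dcP d ω W s (i + 1) k)
      (((i : ℝ) + 1) • (dcP d ω W t i (k + 1) - dcP d ω W t i k)) t := by
  rw [hasDerivAt_pi]
  intro j
  have h := dcw_hasDerivAt (fun k' => ω k' * W k' j) t i k
  simp only [← dcP_apply] at h
  simpa using h

lemma dcP_eq_smul {d : ℕ} {ω : ℕ → ℝ} {W : ℕ → Fin d → ℝ} {t : ℝ}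
    (ht0 : 0 ≤ t) (ht1 : t ≤ 1) :
    ∀ i k, (∀ j, k ≤ j → j ≤ k + i → 0 < ω j) →
      dcP d ω W t i k = dcw ω t i k • dcW d ω W t i k := by
  intro i
  induction i with
  | zero => intro k _; funext j; simp [dcP, dcw, dcW]
  | succ i ih =>
    intro k h
    have hpos : dcw ω t (i + 1) k ≠ 0 := (dcw_pos ht0 ht1 (i + 1) k h).ne'
    have h0 := ih k fun j hj hj' => h j hj (by omega)
    have h1 := ih (k + 1) fun j hj hj' => h j (by omega) (by omega)
    show dcP d ω W t (i + 1) k = _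
    simp only [dcP, dcW, h0, h1, smul_add, smul_smul]
    congr 1 <;> congr 1 <;> field_simp

lemma RB_eq (n d : ℕ) (ω : ℕ → ℝ) (W : ℕ → Fin d → ℝ) :
    RB n d ω W = fun t => (dcw ω t n 0)⁻¹ • dcP d ω W t n 0 := by
  funext t
  unfold RB
  have hden : dcw ω t n 0 = ∑ k ∈ range (n + 1), ω k * bern n k t := by
    rw [dcw_eq_sum]; simp
  have hnum : dcP d ω W t n 0 = ∑ k ∈ range (n + 1), (ω k * bern n k t) • W k := by
    funext j
    rw [dcP_apply, dcw_eq_sum]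
    simp only [Finset.sum_apply, Pi.smul_apply, smul_eq_mul, zero_add]
    exact Finset.sum_congr rfl fun j' _ => by ring
  rw [hden, hnum]

lemma frac4 (A v0 v1 Y N : ℝ) (hA : A ≠ 0) :
    (-Y * A ^ 2 - -(N * (v1 - v0)) * (2 * A ^ 1 * (N * (v1 - v0)))) / (A ^ 2) ^ 2
      = (2 * (N * (v1 - v0)) ^ 2 - Y * A) / A ^ 3 := by
  rw [div_eq_div_iff (pow_ne_zero 2 (pow_ne_zero 2 hA)) (pow_ne_zero 3 hA)]
  ring

lemma fracL (A v0 v1 r0 r1 P X Y N : ℝ) (hA : A ≠ 0) :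
    A ^ 3 * (A⁻¹ * X + -(N * (v1 - v0)) / A ^ 2 * (N * (r1 - r0)) +
      (-(N * (v1 - v0)) / A ^ 2 * (N * (r1 - r0)) +
        (2 * (N * (v1 - v0)) ^ 2 - Y * A) / A ^ 3 * P))
    = A ^ 2 * X - 2 * A * (N * (v1 - v0)) * (N * (r1 - r0))
        + (2 * (N * (v1 - v0)) ^ 2 - Y * A) * P := by
  field_simp
  ring

lemma fracR (A u0 u2 C0 C1 s0 s1 N : ℝ) (hA : A ≠ 0) :
    A ^ 3 * (N * (u2 / A ^ 3) * C0 * s1 - N * (u0 / A ^ 3) * C1 * s0)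
      = N * u2 * C0 * s1 - N * u0 * C1 * s0 := by
  field_simp

lemma floater_algebra (M T u0 u1 u2 q0 q1 q2 : ℝ)
    (hAne : (1 - T) * ((1 - T) * u0 + T * u1) + T * ((1 - T) * u1 + T * u2) ≠ 0) :
((1 - T) * ((1 - T) * u0 + T * u1) + T * ((1 - T) * u1 + T * u2))⁻¹ *
          ((M + 2) *
            ((M + 1) * (u2 * q2 - u1 * q1) -
              (M + 1) * (u1 * q1 - u0 * q0))) +
        -((M + 2) * ((1 - T) * u1 + T * u2 - ((1 - T) * u0 + T * u1))) /
            ((1 - T) * ((1 - T) * u0 + T * u1) + T * ((1 - T) * u1 + T * u2)) ^ 2 *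
          ((M + 2) *
            ((1 - T) * (u1 * q1) + T * (u2 * q2) -
              ((1 - T) * (u0 * q0) + T * (u1 * q1)))) +
      (-((M + 2) * ((1 - T) * u1 + T * u2 - ((1 - T) * u0 + T * u1))) /
            ((1 - T) * ((1 - T) * u0 + T * u1) + T * ((1 - T) * u1 + T * u2)) ^ 2 *
          ((M + 2) *
            ((1 - T) * (u1 * q1) + T * (u2 * q2) -
              ((1 - T) * (u0 * q0) + T * (u1 * q1)))) +
        (-((M + 2) * ((M + 1) * (u2 - u1) - (M + 1) * (u1 - u0))) *
                ((1 - T) * ((1 - T) * u0 + T * u1) + T * ((1 - T) * u1 + T * u2)) ^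
                  2 -
              -((M + 2) * ((1 - T) * u1 + T * u2 - ((1 - T) * u0 + T * u1))) *
                (2 *
                    ((1 - T) * ((1 - T) * u0 + T * u1) +
                        T * ((1 - T) * u1 + T * u2)) ^
                      1 *
                  ((M + 2) * ((1 - T) * u1 + T * u2 - ((1 - T) * u0 + T * u1))))) /
            (((1 - T) * ((1 - T) * u0 + T * u1) + T * ((1 - T) * u1 + T * u2)) ^
                2) ^
              2 *
          ((1 - T) * ((1 - T) * (u0 * q0) + T * (u1 * q1)) +
            T * ((1 - T) * (u1 * q1) + T * (u2 * q2)))) =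
    (M + 1 + 1) *
            (u2 /
              ((1 - T) * ((1 - T) * u0 + T * u1) + T * ((1 - T) * u1 + T * u2)) ^
                3) *
          (2 * (M + 1 + 1) * ((1 - T) * u0 + T * u1) ^ 2 -
              (M + 1 + 1 - 1) * u0 *
                ((1 - T) * ((1 - T) * u0 + T * u1) + T * ((1 - T) * u1 + T * u2)) -
            2 * ((1 - T) * u0 + T * u1) *
              ((1 - T) * ((1 - T) * u0 + T * u1) + T * ((1 - T) * u1 + T * u2))) *
        (q2 - q1) -
      (M + 1 + 1) *
            (u0 /
              ((1 - T) * ((1 - T) * u0 + T * u1) + T * ((1 - T) * u1 + T * u2)) ^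
                3) *
          (2 * (M + 1 + 1) * ((1 - T) * u1 + T * u2) ^ 2 -
              (M + 1 + 1 - 1) * u2 *
                ((1 - T) * ((1 - T) * u0 + T * u1) + T * ((1 - T) * u1 + T * u2)) -
            2 * ((1 - T) * u1 + T * u2) *
              ((1 - T) * ((1 - T) * u0 + T * u1) + T * ((1 - T) * u1 + T * u2))) *
        (q1 - q0)
 := by
  rw [frac4 _ _ _ _ _ hAne, show ((1 - T) * u1 + T * u2 - ((1 - T) * u0 + T * u1))
      = ((1 - T) * u1 + T * u2) - ((1 - T) * u0 + T * u1) from rfl]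
  apply mul_left_cancel₀ (pow_ne_zero 3 hAne)
  rw [fracL _ _ _ _ _ _ _ _ _ hAne, fracR _ _ _ _ _ _ _ _ hAne]
  ring

/-- Floater's formula for the second derivative of a rational Bézier curve. -/
theorem floater_second_derivative (n d : ℕ) (hn : 2 ≤ n) (hd : 1 ≤ d)
    (W : ℕ → Fin d → ℝ) (ω : ℕ → ℝ) (hω : ∀ k ≤ n, 0 < ω k)
    (t : ℝ) (ht0 : 0 ≤ t) (ht1 : t ≤ 1) :
    iteratedDeriv 2 (RB n d ω W) t =
      ((n : ℝ) * (dcw ω t (n - 2) 2 / (dcw ω t n 0) ^ 3) *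
          (2 * (n : ℝ) * (dcw ω t (n - 1) 0) ^ 2
             - ((n : ℝ) - 1) * dcw ω t (n - 2) 0 * dcw ω t n 0
             - 2 * dcw ω t (n - 1) 0 * dcw ω t n 0)) •
        (dcW d ω W t (n - 2) 2 - dcW d ω W t (n - 2) 1)
      - ((n : ℝ) * (dcw ω t (n - 2) 0 / (dcw ω t n 0) ^ 3) *
          (2 * (n : ℝ) * (dcw ω t (n - 1) 1) ^ 2
             - ((n : ℝ) - 1) * dcw ω t (n - 2) 2 * dcw ω t n 0
             - 2 * dcw ω t (n - 1) 1 * dcw ω t n 0)) •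
        (dcW d ω W t (n - 2) 1 - dcW d ω W t (n - 2) 0) := by
  obtain ⟨m, rfl⟩ : ∃ m, n = m + 2 := ⟨n - 2, by omega⟩
  clear hn hd
  have e2 : m + 2 - 2 = m := by omega
  have e1 : m + 2 - 1 = m + 1 := by omega
  rw [e1, e2]
  -- positivity
  have hApos : 0 < dcw ω t (m + 2) 0 :=
    dcw_pos ht0 ht1 (m + 2) 0 (fun j _ hj => hω j (by omega))
  -- derivative of the weight function A
  have hA : ∀ s : ℝ, HasDerivAt (fun r => dcw ω r (m + 2) 0)
      (((m : ℝ) + 2) * (dcw ω s (m + 1) 1 - dcw ω s (m + 1) 0)) s := by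
    intro s
    have h := dcw_hasDerivAt ω s (m + 1) 0
    have e : ((m + 1 : ℕ) : ℝ) + 1 = (m : ℝ) + 2 := by push_cast; ring
    rw [e] at h; exact h
  -- derivative of the point function P
  have hP : ∀ s : ℝ, HasDerivAt (fun r => dcP d ω W r (m + 2) 0)
      (((m : ℝ) + 2) • (dcP d ω W s (m + 1) 1 - dcP d ω W s (m + 1) 0)) s := by
    intro s
    have h := dcP_hasDerivAt d ω W s (m + 1) 0
    have e : ((m + 1 : ℕ) : ℝ) + 1 = (m : ℝ) + 2 := by push_cast; ring
    rw [e] at h; exact h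
  -- second-level derivatives at t
  have hA1 : HasDerivAt (fun s => ((m : ℝ) + 2) * (dcw ω s (m + 1) 1 - dcw ω s (m + 1) 0))
      (((m : ℝ) + 2) * (((m : ℝ) + 1) * (dcw ω t m 2 - dcw ω t m 1)
        - ((m : ℝ) + 1) * (dcw ω t m 1 - dcw ω t m 0))) t :=
    ((dcw_hasDerivAt ω t m 1).sub (dcw_hasDerivAt ω t m 0)).const_mul _
  have hP1 : HasDerivAt (fun s => ((m : ℝ) + 2) • (dcP d ω W s (m + 1) 1 - dcP d ω W s (m + 1) 0))
      (((m : ℝ) + 2) • (((m : ℝ) + 1) • (dcP d ω W t m 2 - dcP d ω W t m 1)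
        - ((m : ℝ) + 1) • (dcP d ω W t m 1 - dcP d ω W t m 0))) t :=
    ((dcP_hasDerivAt d ω W t m 1).sub (dcP_hasDerivAt d ω W t m 0)).const_smul ((m : ℝ) + 2)
  -- eventual nonvanishing of A
  have hev : ∀ᶠ s in nhds t, dcw ω s (m + 2) 0 ≠ 0 := by
    have hAcont : Continuous (fun s => dcw ω s (m + 2) 0) := by
      have hdiff : Differentiable ℝ (fun s : ℝ => dcw ω s (m + 2) 0) :=
        fun s => (hA s).differentiableAt
      exact hdiff.continuous
    exact hAcont.continuousAt.eventually_ne hApos.ne'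
  -- first derivative of RB near t
  have hderiv_eq : deriv (RB (m + 2) d ω W) =ᶠ[nhds t] (fun s =>
      (dcw ω s (m + 2) 0)⁻¹ •
          (((m : ℝ) + 2) • (dcP d ω W s (m + 1) 1 - dcP d ω W s (m + 1) 0))
        + (-(((m : ℝ) + 2) * (dcw ω s (m + 1) 1 - dcw ω s (m + 1) 0)) /
              (dcw ω s (m + 2) 0) ^ 2) • dcP d ω W s (m + 2) 0) := by
    filter_upwards [hev] with s hs
    have h := ((hA s).inv hs).smul (hP s)
    rw [RB_eq]
    exact h.deriv
  -- second derivative of RB at t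
  have hterm1 := ((hA t).inv hApos.ne').smul hP1
  have hterm2 := (hA1.neg.div ((hA t).pow 2) (pow_ne_zero 2 hApos.ne')).smul (hP t)
  have htot := hterm1.add hterm2
  have h2 : iteratedDeriv 2 (RB (m + 2) d ω W) t = deriv (deriv (RB (m + 2) d ω W)) t := by
    rw [show (2 : ℕ) = 1 + 1 from rfl, iteratedDeriv_succ, iteratedDeriv_one]
  rw [h2, hderiv_eq.deriv_eq, (show HasDerivAt (fun s =>
        (dcw ω s (m + 2) 0)⁻¹ •
            (((m : ℝ) + 2) • (dcP d ω W s (m + 1) 1 - dcP d ω W s (m + 1) 0))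
          + (-(((m : ℝ) + 2) * (dcw ω s (m + 1) 1 - dcw ω s (m + 1) 0)) /
                (dcw ω s (m + 2) 0) ^ 2) • dcP d ω W s (m + 2) 0) _ t from htot).deriv]
  -- now pure algebra at the point t
  have hq0 : dcP d ω W t m 0 = dcw ω t m 0 • dcW d ω W t m 0 :=
    dcP_eq_smul ht0 ht1 m 0 (fun j _ hj => hω j (by omega))
  have hq1 : dcP d ω W t m 1 = dcw ω t m 1 • dcW d ω W t m 1 :=
    dcP_eq_smul ht0 ht1 m 1 (fun j _ hj => hω j (by omega))
  have hq2 : dcP d ω W t m 2 = dcw ω t m 2 • dcW d ω W t m 2 :=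
    dcP_eq_smul ht0 ht1 m 2 (fun j _ hj => hω j (by omega))
  have dcwstep : ∀ i k, dcw ω t (i + 1) k = (1 - t) * dcw ω t i k + t * dcw ω t i (k + 1) :=
    fun i k => by simp [dcw]
  have dcPstep : ∀ i k, dcP d ω W t (i + 1) k
      = (1 - t) • dcP d ω W t i k + t • dcP d ω W t i (k + 1) :=
    fun i k => by simp [dcP]
  have em : m + 2 = m + 1 + 1 := rfl
  rw [em] at hApos ⊢
  simp only [dcwstep, dcPstep] at hApos ⊢
  funext j
  simp only [hq0, hq1, hq2, Pi.add_apply, Pi.sub_apply, Pi.smul_apply, smul_eq_mul]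
  have hAne : (1 - t) * ((1 - t) * dcw ω t m 0 + t * dcw ω t m 1)
      + t * ((1 - t) * dcw ω t m 1 + t * dcw ω t m 2) ≠ 0 := hApos.ne'
  push_cast
  exact floater_algebra (m : ℝ) t (dcw ω t m 0) (dcw ω t m 1) (dcw ω t m 2)
    (dcW d ω W t m 0 j) (dcW d ω W t m 1 j) (dcW d ω W t m 2 j) hAne
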